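/- arXiv:1003.2429 — 6 statements merged into one kernel-verified Lean document; each statement's English description precedes it below -/
import Mathlib

section
/- Let G be a signed, undirected complete graph in which every triangle has an odd number of positive edges. Then the vertices of G can be partitioned into two sets A and B (possibly one empty) such that every edge within A and within B is positive, and every edge with one endpoint in A and the other in B is negative. -/
/-!
Fix a vertex `v₀` and give every vertex the sign `σ v` of its edge to `v₀` (with `σ v₀ = 1`).
For `±1` signs, an odd number of positive edges in a triangle means exactly that the product of its
three signs is `1`, so on the triangle `v₀ u v` we get `s u v = σ u * σ v`. Hence `s` is positive
exactly between vertices of equal `σ`, and `A = {v | σ v = 1}` is the required partition.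
-/

theorem Int.eq_mul_of_odd_count_eq_one {a b c : ℤ}
    (ha : a = 1 ∨ a = -1) (hb : b = 1 ∨ b = -1) (hc : c = 1 ∨ c = -1)
    (hodd : Odd ((if a = 1 then 1 else 0) + (if b = 1 then 1 else 0) +
      (if c = 1 then 1 else 0) : ℕ)) :
    b = a * c := by
  rcases ha with rfl | rfl <;> rcases hb with rfl | rfl <;> rcases hc with rfl | rfl <;>
    simp_all [Nat.odd_iff]

theorem exists_vertex_signs_of_odd_triangles {V : Type*} (s : V → V → ℤ)
    (hsymm : ∀ u v : V, s u v = s v u)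
    (hsign : ∀ u v : V, u ≠ v → s u v = 1 ∨ s u v = -1)
    (htri : ∀ u v w : V, u ≠ v → v ≠ w → u ≠ w →
      Odd ((if s u v = 1 then 1 else 0) + (if s v w = 1 then 1 else 0) +
        (if s u w = 1 then 1 else 0) : ℕ)) :
    ∃ σ : V → ℤ, (∀ v, σ v = 1 ∨ σ v = -1) ∧ ∀ u v, u ≠ v → s u v = σ u * σ v := by
  classical
  rcases isEmpty_or_nonempty V with hV | ⟨⟨v₀⟩⟩
  · exact ⟨fun _ => 1, fun _ => Or.inl rfl, fun u => isEmptyElim u⟩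
  refine ⟨fun v => if v = v₀ then 1 else s v₀ v, fun v => ?_, fun u v huv => ?_⟩
  · dsimp only
    split_ifs with hv
    · exact Or.inl rfl
    · exact hsign v₀ v (Ne.symm hv)
  by_cases hu : u = v₀
  · subst hu
    simp [Ne.symm huv]
  by_cases hv : v = v₀
  · subst hv
    simp [hu, hsymm u v]
  simp only [hu, hv, if_false]
  exact Int.eq_mul_of_odd_count_eq_one (hsign v₀ u (Ne.symm hu)) (hsign u v huv)
    (hsign v₀ v (Ne.symm hv)) (htri v₀ u v (Ne.symm hu) huv (Ne.symm hv))

theorem sign_eq_of_eq_vertex_sign_mul {V : Type*} {s : V → V → ℤ} {σ : V → ℤ}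
    (hσ : ∀ v, σ v = 1 ∨ σ v = -1) (hs : ∀ u v, u ≠ v → s u v = σ u * σ v)
    {u v : V} (huv : u ≠ v) :
    ((u ∈ {w | σ w = 1} ↔ v ∈ {w | σ w = 1}) → s u v = 1) ∧
      (¬ (u ∈ {w | σ w = 1} ↔ v ∈ {w | σ w = 1}) → s u v = -1) := by
  rw [hs u v huv]
  rcases hσ u with hu | hu <;> rcases hσ v with hv | hv <;> simp [hu, hv]

theorem stmt0_general {V : Type*} (s : V → V → ℤ)
    (hsymm : ∀ u v : V, s u v = s v u)
    (hsign : ∀ u v : V, u ≠ v → s u v = 1 ∨ s u v = -1)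
    (htri : ∀ u v w : V, u ≠ v → v ≠ w → u ≠ w →
      Odd ((if s u v = 1 then 1 else 0) + (if s v w = 1 then 1 else 0) +
        (if s u w = 1 then 1 else 0) : ℕ)) :
    ∃ A : Set V, ∀ u v : V, u ≠ v →
      (((u ∈ A) ↔ (v ∈ A)) → s u v = 1) ∧ (¬ ((u ∈ A) ↔ (v ∈ A)) → s u v = -1) := by
  obtain ⟨σ, hσ, hs⟩ := exists_vertex_signs_of_odd_triangles s hsymm hsign htri
  exact ⟨{w | σ w = 1}, fun _ _ => sign_eq_of_eq_vertex_sign_mul hσ hs⟩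

/-- Cartwright–Harary: a signed complete graph in which every triangle has an
odd number of positive edges can be partitioned into two sets (one possibly
empty) with positive edges inside the sets and negative edges across. -/
theorem stmt0 {V : Type*} [Fintype V] (s : V → V → ℤ)
    (hsymm : ∀ u v : V, s u v = s v u)
    (hsign : ∀ u v : V, u ≠ v → s u v = 1 ∨ s u v = -1)
    (htri : ∀ u v w : V, u ≠ v → v ≠ w → u ≠ w →
      Odd ((if s u v = 1 then 1 else 0) + (if s v w = 1 then 1 else 0) +
        (if s u w = 1 then 1 else 0) : ℕ)) :
    ∃ A : Set V, ∀ u v : V, u ≠ v →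
      (((u ∈ A) ↔ (v ∈ A)) → s u v = 1) ∧ (¬ ((u ∈ A) ↔ (v ∈ A)) → s u v = -1) :=
  stmt0_general s hsymm hsign htri
end

section
/- Let G be a signed complete graph in which every triangle has an odd number of positive edges. Then the relation 'u = v or the edge {u,v} is positive' is an equivalence relation on the vertices of G with at most two equivalence classes. -/
/-!
Call `u ~ v` when `u = v` or the edge `uv` is positive. The parity condition on a triangle `uvw`
says exactly that `uw` is positive iff `uv` and `vw` have the same sign. Two positive sides
therefore force a positive third side, so `~` is transitive; and two negative sides also force a
positive third side, so any two vertices outside the class of a fixed vertex are equivalent.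
-/

theorem odd_ite_add_ite_add_ite_iff (p q r : Prop) [Decidable p] [Decidable q] [Decidable r] :
    Odd ((if p then 1 else 0) + (if q then 1 else 0) + (if r then 1 else 0) : ℕ) ↔
      (r ↔ (p ↔ q)) := by
  by_cases hp : p <;> by_cases hq : q <;> by_cases hr : r <;> simp [hp, hq, hr, Nat.odd_iff]

def OddTriangles {V : Type*} (s : V → V → ℤ) : Prop :=
  ∀ u v w : V, u ≠ v → v ≠ w → u ≠ w →
    Odd ((if s u v = 1 then 1 else 0) + (if s v w = 1 then 1 else 0) +
      (if s u w = 1 then 1 else 0) : ℕ)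

namespace OddTriangles

variable {V : Type*} {s : V → V → ℤ}

theorem pos_iff (htri : OddTriangles s) {u v w : V} (huv : u ≠ v) (hvw : v ≠ w) (huw : u ≠ w) :
    s u w = 1 ↔ (s u v = 1 ↔ s v w = 1) :=
  (odd_ite_add_ite_add_ite_iff _ _ _).1 (htri u v w huv hvw huw)

theorem pos_trans (htri : OddTriangles s) {u v w : V} (huv : s u v = 1) (hvw : s v w = 1)
    (huw : u ≠ w) : s u w = 1 := by
  rcases eq_or_ne u v with rfl | hu_v
  · exact hvw
  rcases eq_or_ne v w with rfl | hv_w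
  · exact huv
  exact (htri.pos_iff hu_v hv_w huw).2 (iff_of_true huv hvw)

theorem pos_of_not_pos_of_not_pos (htri : OddTriangles s) {u v w : V} (huv : u ≠ v)
    (hvw : v ≠ w) (huw : u ≠ w) (hsuv : s u v ≠ 1) (hsvw : s v w ≠ 1) : s u w = 1 :=
  (htri.pos_iff huv hvw huw).2 (iff_of_false hsuv hsvw)

theorem equivalence_eq_or_pos (htri : OddTriangles s) (hsymm : ∀ u v : V, s u v = s v u) :
    Equivalence (fun u v : V => u = v ∨ s u v = 1) where
  refl _ := Or.inl rfl
  symm := by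
    rintro u v (rfl | h)
    · exact Or.inl rfl
    · exact Or.inr (hsymm u v ▸ h)
  trans := by
    rintro u v w (rfl | huv) (rfl | hvw)
    · exact Or.inl rfl
    · exact Or.inr hvw
    · exact Or.inr huv
    · exact (eq_or_ne u w).imp_right (htri.pos_trans huv hvw)

theorem exists_cover_eq_or_pos (htri : OddTriangles s) (hsymm : ∀ u v : V, s u v = s v u)
    (a : V) : ∃ b : V, ∀ v : V, (a = v ∨ s a v = 1) ∨ (b = v ∨ s b v = 1) := by
  by_cases h : ∀ v : V, a = v ∨ s a v = 1
  · exact ⟨a, fun v => Or.inl (h v)⟩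
  obtain ⟨b, hb⟩ := not_forall.1 h
  obtain ⟨hab, hsab⟩ := not_or.1 hb
  refine ⟨b, fun v => or_iff_not_imp_left.2 fun hv => (eq_or_ne b v).imp_right fun hbv => ?_⟩
  obtain ⟨hav, hsav⟩ := not_or.1 hv
  exact htri.pos_of_not_pos_of_not_pos (Ne.symm hab) hav hbv (hsymm b a ▸ hsab) hsav

end OddTriangles

theorem stmt1_general {V : Type*} [Nonempty V] (s : V → V → ℤ)
    (hsymm : ∀ u v : V, s u v = s v u)
    (htri : ∀ u v w : V, u ≠ v → v ≠ w → u ≠ w →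
      Odd ((if s u v = 1 then 1 else 0) + (if s v w = 1 then 1 else 0) +
        (if s u w = 1 then 1 else 0) : ℕ)) :
    Equivalence (fun u v : V => u = v ∨ s u v = 1) ∧
    ∃ a b : V, ∀ v : V, (a = v ∨ s a v = 1) ∨ (b = v ∨ s b v = 1) := by
  have htri' : OddTriangles s := htri
  obtain ⟨a⟩ := ‹Nonempty V›
  exact ⟨htri'.equivalence_eq_or_pos hsymm, a, htri'.exists_cover_eq_or_pos hsymm a⟩

/-- In a signed complete graph where every triangle has an odd number of
positive edges, the relation "equal or joined by a positive edge" is an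
equivalence relation with at most two classes. -/
theorem stmt1 {V : Type*} [Fintype V] [Nonempty V] (s : V → V → ℤ)
    (hsymm : ∀ u v : V, s u v = s v u)
    (hsign : ∀ u v : V, u ≠ v → s u v = 1 ∨ s u v = -1)
    (htri : ∀ u v w : V, u ≠ v → v ≠ w → u ≠ w →
      Odd ((if s u v = 1 then 1 else 0) + (if s v w = 1 then 1 else 0) +
        (if s u w = 1 then 1 else 0) : ℕ)) :
    Equivalence (fun u v : V => u = v ∨ s u v = 1) ∧
    ∃ a b : V, ∀ v : V, (a = v ∨ s a v = 1) ∨ (b = v ∨ s b v = 1) :=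
  stmt1_general s hsymm htri
end

section
/- Let G be a signed complete graph on a finite vertex set. Then every triangle of G has an odd number of positive edges if and only if every cycle of G has an even number of negative edges. -/
/-!
Write `σ(uv) ∈ {±1}` for the signs. The triangle condition says `σ(uv) σ(vw) σ(uw) = 1` on
every triangle. Fixing a vertex `o` and setting `f(o) = 1`, `f(x) = σ(ox)` otherwise, the
triangle `o x y` gives `σ(xy) = f(x) f(y)`, so the product of the signs along a closed walk
telescopes to `1`, i.e. the walk has an even number of negative edges. Conversely a triangle is a
cycle of length three.
-/

open Finset

theorem prod_eq_neg_one_pow_card_filter {ι : Type*} (S : Finset ι) (e : ι → ℤ)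
    (he : ∀ i ∈ S, e i = 1 ∨ e i = -1) :
    ∏ i ∈ S, e i = (-1) ^ #(S.filter fun i => e i = -1) := by
  classical
  rw [← prod_filter_mul_prod_filter_not S (fun i => e i = -1),
    prod_congr rfl fun i hi => (mem_filter.1 hi).2, prod_const,
    prod_congr rfl fun i hi => (he i (mem_filter.1 hi).1).resolve_right (mem_filter.1 hi).2,
    prod_const_one, mul_one]

theorem even_card_filter_eq_neg_one_iff {ι : Type*} (S : Finset ι) (e : ι → ℤ)
    (he : ∀ i ∈ S, e i = 1 ∨ e i = -1) :
    Even #(S.filter fun i => e i = -1) ↔ ∏ i ∈ S, e i = 1 := by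
  rw [prod_eq_neg_one_pow_card_filter S e he, neg_one_pow_eq_one_iff_even (by norm_num)]

theorem odd_count_eq_one_iff_mul_eq_one {a b c : ℤ} (ha : a = 1 ∨ a = -1)
    (hb : b = 1 ∨ b = -1) (hc : c = 1 ∨ c = -1) :
    Odd ((if a = 1 then 1 else 0) + (if b = 1 then 1 else 0) + (if c = 1 then 1 else 0) : ℕ) ↔
      a * b * c = 1 := by
  rcases ha with rfl | rfl <;> rcases hb with rfl | rfl <;> rcases hc with rfl | rfl <;> decide

theorem mul_self_eq_one_of_sign {a : ℤ} (ha : a = 1 ∨ a = -1) : a * a = 1 := by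
  rcases ha with rfl | rfl <;> rfl

theorem exists_switching_of_triangle_mul_eq_one {V : Type*} (s : V → V → ℤ)
    (hsymm : ∀ u v, s u v = s v u)
    (hsign : ∀ u v, u ≠ v → s u v = 1 ∨ s u v = -1)
    (htri : ∀ u v w, u ≠ v → v ≠ w → u ≠ w → s u v * s v w * s u w = 1) (o : V) :
    ∃ f : V → ℤ, (∀ x, f x * f x = 1) ∧ ∀ x y, x ≠ y → s x y = f x * f y := by
  classical
  refine ⟨fun x => if x = o then 1 else s o x, fun x => ?_, fun x y hxy => ?_⟩
  · dsimp only
    split_ifs with hx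
    · rfl
    · exact mul_self_eq_one_of_sign (hsign o x (Ne.symm hx))
  · by_cases hx : x = o
    · subst hx
      simp [Ne.symm hxy]
    by_cases hy : y = o
    · subst hy
      simp [hx, hsymm x y]
    simp only [if_neg hx, if_neg hy]
    have h1 := mul_self_eq_one_of_sign (hsign o x (Ne.symm hx))
    have h2 := mul_self_eq_one_of_sign (hsign o y (Ne.symm hy))
    linear_combination (-s x y * s o y * s o y) * h1 - s x y * h2 +
      (s o x * s o y) * htri o x y (Ne.symm hx) hxy (Ne.symm hy)

theorem prod_range_succ_eq_prod_range_of_eq {M₀ : Type*} [CommMonoidWithZero M₀]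
    [IsCancelMulZero M₀] (g : ℕ → M₀) (k : ℕ) (hk : g k = g 0) (h0 : g 0 ≠ 0) :
    ∏ i ∈ range k, g (i + 1) = ∏ i ∈ range k, g i := by
  have h := (prod_range_succ' g k).symm.trans (prod_range_succ g k)
  rw [hk] at h
  exact mul_right_cancel₀ h0 h

theorem prod_mul_succ_eq_one_of_closed {V : Type*} (f : V → ℤ) (hf : ∀ x, f x * f x = 1)
    (k : ℕ) (v : ℕ → V) (hclosed : v k = v 0) :
    ∏ i ∈ range k, f (v i) * f (v (i + 1)) = 1 := by
  have hf0 : f (v 0) ≠ 0 := left_ne_zero_of_mul_eq_one (hf (v 0))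
  rw [prod_mul_distrib,
    prod_range_succ_eq_prod_range_of_eq (fun i => f (v i)) k (by rw [hclosed]) hf0,
    ← prod_mul_distrib, prod_congr rfl fun i _ => hf (v i), prod_const_one]

theorem ne_succ_of_injOn_of_closed {V : Type*} {k : ℕ} {v : ℕ → V} (hk : 1 < k)
    (hinj : Set.InjOn v (Set.Iio k)) (hclosed : v k = v 0) {i : ℕ} (hi : i < k) :
    v i ≠ v (i + 1) := by
  intro h
  rcases (show i + 1 ≤ k from hi).eq_or_lt with hlast | hlt
  · rw [hlast, hclosed] at h
    have := hinj hi (Set.mem_Iio.2 (by omega)) h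
    omega
  · have := hinj hi hlt h
    omega

def triangleWalk {V : Type*} (a b c : V) (i : ℕ) : V :=
  ![a, b, c] (Fin.ofNat 3 i)

section triangleWalk

variable {V : Type*} (a b c : V)

@[simp] theorem triangleWalk_zero : triangleWalk a b c 0 = a := rfl
@[simp] theorem triangleWalk_one : triangleWalk a b c 1 = b := rfl
@[simp] theorem triangleWalk_two : triangleWalk a b c 2 = c := rfl
@[simp] theorem triangleWalk_three : triangleWalk a b c 3 = a := rfl

end triangleWalk

theorem even_card_neg_edges_iff_prod_eq_one {V : Type*} (s : V → V → ℤ)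
    (hsign : ∀ u v, u ≠ v → s u v = 1 ∨ s u v = -1) {k : ℕ} {v : ℕ → V} (hk : 1 < k)
    (hinj : Set.InjOn v (Set.Iio k)) (hclosed : v k = v 0) :
    Even #((range k).filter fun i => s (v i) (v (i + 1)) = -1) ↔
      ∏ i ∈ range k, s (v i) (v (i + 1)) = 1 :=
  even_card_filter_eq_neg_one_iff _ _ fun _ hi =>
    hsign _ _ (ne_succ_of_injOn_of_closed hk hinj hclosed (mem_range.1 hi))

theorem injOn_triangleWalk {V : Type*} {a b c : V} (hab : a ≠ b) (hbc : b ≠ c) (hac : a ≠ c) :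
    Set.InjOn (triangleWalk a b c) (Set.Iio 3) := by
  intro i hi j hj h
  simp only [Set.mem_Iio] at hi hj
  interval_cases i <;> interval_cases j <;> simp_all [ne_comm]

theorem stmt3_general {V : Type*} (s : V → V → ℤ)
    (hsymm : ∀ u v : V, s u v = s v u)
    (hsign : ∀ u v : V, u ≠ v → s u v = 1 ∨ s u v = -1) :
    (∀ u v w : V, u ≠ v → v ≠ w → u ≠ w →
      Odd ((if s u v = 1 then 1 else 0) + (if s v w = 1 then 1 else 0) +
        (if s u w = 1 then 1 else 0) : ℕ)) ↔
    (∀ (k : ℕ) (v : ℕ → V), 3 ≤ k → Set.InjOn v (Set.Iio k) → v k = v 0 →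
      Even (((Finset.range k).filter fun i => s (v i) (v (i + 1)) = -1).card)) := by
  have htri_iff : ∀ u v w, u ≠ v → v ≠ w → u ≠ w →
      (Odd ((if s u v = 1 then 1 else 0) + (if s v w = 1 then 1 else 0) +
        (if s u w = 1 then 1 else 0) : ℕ) ↔ s u v * s v w * s u w = 1) :=
    fun u v w huv hvw huw =>
      odd_count_eq_one_iff_mul_eq_one (hsign u v huv) (hsign v w hvw) (hsign u w huw)
  constructor
  · intro htri k v hk hinj hclosed
    obtain ⟨f, hf, hs⟩ := exists_switching_of_triangle_mul_eq_one s hsymm hsign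
      (fun u v w huv hvw huw => (htri_iff u v w huv hvw huw).1 (htri u v w huv hvw huw)) (v 0)
    rw [even_card_neg_edges_iff_prod_eq_one s hsign (by omega) hinj hclosed,
      prod_congr rfl fun i hi =>
        hs _ _ (ne_succ_of_injOn_of_closed (by omega) hinj hclosed (mem_range.1 hi))]
    exact prod_mul_succ_eq_one_of_closed f hf k v hclosed
  · intro hcyc a b c hab hbc hac
    have hinj := injOn_triangleWalk hab hbc hac
    have h := hcyc 3 (triangleWalk a b c) le_rfl hinj rfl
    rw [even_card_neg_edges_iff_prod_eq_one s hsign (by omega) hinj rfl] at h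
    rw [htri_iff a b c hab hbc hac, hsymm a c]
    simpa [prod_range_succ] using h

/-- In a signed complete graph, every triangle has an odd number of positive
edges iff every cycle has an even number of negative edges. -/
theorem stmt3 {V : Type*} [Fintype V] (s : V → V → ℤ)
    (hsymm : ∀ u v : V, s u v = s v u)
    (hsign : ∀ u v : V, u ≠ v → s u v = 1 ∨ s u v = -1) :
    (∀ u v w : V, u ≠ v → v ≠ w → u ≠ w →
      Odd ((if s u v = 1 then 1 else 0) + (if s v w = 1 then 1 else 0) +
        (if s u w = 1 then 1 else 0) : ℕ)) ↔
    (∀ (k : ℕ) (v : ℕ → V), 3 ≤ k → Set.InjOn v (Set.Iio k) → v k = v 0 →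
      Even (((Finset.range k).filter fun i => s (v i) (v (i + 1)) = -1).card)) :=
  stmt3_general s hsymm hsign
end

section
/- Let G be a signed directed tournament in which every set of three vertices is status-consistent. Then there exists a linear ordering v_1, ..., v_n of the vertices such that every positive edge (v_i, v_j) satisfies i < j and every negative edge (v_i, v_j) satisfies i > j. -/
/-- Three vertices of a signed directed graph are status-consistent if they can
be assigned distinct real status values such that positive edges among them go
from lower to higher status and negative edges from higher to lower status. -/
def statusConsistent {V : Type*} (E : V → V → Prop) (sg : V → V → ℤ)
    (u v w : V) : Prop :=
  ∃ x : V → ℝ, x u ≠ x v ∧ x v ≠ x w ∧ x u ≠ x w ∧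
    ∀ a b : V, (a = u ∨ a = v ∨ a = w) → (b = u ∨ b = v ∨ b = w) → E a b →
      (sg a b = 1 → x a < x b) ∧ (sg a b = -1 → x b < x a)

/-!
The signs orient every edge of the tournament "upwards": `u ≺ v` when `u → v` is positive or
`v → u` is negative. This is a strict total order, since a cyclic triple `u ≺ v ≺ w ≺ u` would
admit no consistent status values. Ranking each vertex by the number of vertices below it then
gives the required ordering.
-/

theorem exists_injective_nat_strictMono_of_strictTotal {α : Type*} [Finite α]
    (r : α → α → Prop) (irrefl : ∀ a, ¬ r a a) (trans : ∀ a b c, r a b → r b c → r a c)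
    (total : ∀ a b, a ≠ b → r a b ∨ r b a) :
    ∃ f : α → ℕ, Function.Injective f ∧ ∀ a b, r a b → f a < f b := by
  have rank_lt : ∀ a b, r a b → {c | r c a}.ncard < {c | r c b}.ncard := fun a b hab =>
    Set.ncard_lt_ncard <| Set.ssubset_iff_of_subset (fun c hca => trans c a b hca hab) |>.mpr
      ⟨a, hab, irrefl a⟩
  refine ⟨fun a => {c | r c a}.ncard, fun a b heq => ?_, rank_lt⟩
  by_contra hab
  rcases total a b hab with h | h
  · exact (rank_lt a b h).ne heq
  · exact (rank_lt b a h).ne heq.symm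

def statusLT {V : Type*} (E : V → V → Prop) (sg : V → V → ℤ) (u v : V) : Prop :=
  (E u v ∧ sg u v = 1) ∨ (E v u ∧ sg v u = -1)

section StatusOrder

variable {V : Type*} {E : V → V → Prop} {sg : V → V → ℤ}

theorem statusLT_irrefl (hirr : ∀ v : V, ¬ E v v) (v : V) : ¬ statusLT E sg v v := by
  rintro (⟨h, -⟩ | ⟨h, -⟩) <;> exact hirr v h

theorem statusLT_asymm (hirr : ∀ v : V, ¬ E v v)
    (htour : ∀ u v : V, u ≠ v → (E u v ↔ ¬ E v u)) {u v : V} (huv : statusLT E sg u v) :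
    ¬ statusLT E sg v u := by
  have hne : u ≠ v := by rintro rfl; exact statusLT_irrefl hirr u huv
  rcases huv with ⟨h1, h2⟩ | ⟨h1, h2⟩ <;> rintro (⟨h3, h4⟩ | ⟨h3, h4⟩)
  · exact (htour u v hne).mp h1 h3
  · omega
  · omega
  · exact (htour v u hne.symm).mp h1 h3

theorem statusLT_total (htour : ∀ u v : V, u ≠ v → (E u v ↔ ¬ E v u))
    (hsg : ∀ u v : V, E u v → sg u v = 1 ∨ sg u v = -1) {u v : V} (huv : u ≠ v) :
    statusLT E sg u v ∨ statusLT E sg v u := by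
  by_cases h : E u v
  · rcases hsg u v h with hs | hs
    · exact .inl (.inl ⟨h, hs⟩)
    · exact .inr (.inr ⟨h, hs⟩)
  · have h' : E v u := not_not.mp fun h'' => h ((htour u v huv).mpr h'')
    rcases hsg v u h' with hs | hs
    · exact .inr (.inl ⟨h', hs⟩)
    · exact .inl (.inr ⟨h', hs⟩)

theorem statusConsistent.not_statusLT_cycle {u v w : V} (h : statusConsistent E sg u v w)
    (huv : statusLT E sg u v) (hvw : statusLT E sg v w) : ¬ statusLT E sg w u := by
  obtain ⟨x, -, -, -, hx⟩ := h
  have lt_of_statusLT : ∀ a b, (a = u ∨ a = v ∨ a = w) → (b = u ∨ b = v ∨ b = w) →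
      statusLT E sg a b → x a < x b := by
    rintro a b ha hb (⟨hab, hs⟩ | ⟨hba, hs⟩)
    · exact (hx a b ha hb hab).1 hs
    · exact (hx b a hb ha hba).2 hs
  intro hwu
  have := lt_of_statusLT u v (by simp) (by simp) huv
  have := lt_of_statusLT v w (by simp) (by simp) hvw
  have := lt_of_statusLT w u (by simp) (by simp) hwu
  linarith

theorem statusLT_trans (hirr : ∀ v : V, ¬ E v v)
    (htour : ∀ u v : V, u ≠ v → (E u v ↔ ¬ E v u))
    (hsg : ∀ u v : V, E u v → sg u v = 1 ∨ sg u v = -1)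
    (hsc : ∀ u v w : V, u ≠ v → v ≠ w → u ≠ w → statusConsistent E sg u v w)
    {u v w : V} (huv : statusLT E sg u v) (hvw : statusLT E sg v w) : statusLT E sg u w := by
  have ne_of_statusLT : ∀ {a b : V}, statusLT E sg a b → a ≠ b := by
    rintro a _ hab rfl; exact statusLT_irrefl hirr a hab
  by_cases huw : u = w
  · subst huw; exact absurd hvw (statusLT_asymm hirr htour huv)
  refine (statusLT_total htour hsg huw).resolve_right ?_
  exact (hsc u v w (ne_of_statusLT huv) (ne_of_statusLT hvw) huw).not_statusLT_cycle huv hvw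

end StatusOrder

/-- If every triple of vertices of a signed directed tournament is
status-consistent, then there is a linear ordering of the vertices such that
positive edges point forward and negative edges backward. -/
theorem stmt5 {V : Type*} [Fintype V] (E : V → V → Prop) (sg : V → V → ℤ)
    (hirr : ∀ v : V, ¬ E v v)
    (htour : ∀ u v : V, u ≠ v → (E u v ↔ ¬ E v u))
    (hsg : ∀ u v : V, E u v → sg u v = 1 ∨ sg u v = -1)
    (hsc : ∀ u v w : V, u ≠ v → v ≠ w → u ≠ w → statusConsistent E sg u v w) :
    ∃ f : V → ℕ, Function.Injective f ∧
      ∀ u v : V, E u v → (sg u v = 1 → f u < f v) ∧ (sg u v = -1 → f v < f u) := by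
  obtain ⟨f, hf_inj, hf_lt⟩ := exists_injective_nat_strictMono_of_strictTotal (statusLT E sg)
    (statusLT_irrefl hirr) (fun _ _ _ => statusLT_trans hirr htour hsg hsc)
    (fun _ _ => statusLT_total htour hsg)
  exact ⟨f, hf_inj, fun u v huv =>
    ⟨fun hs => hf_lt u v (.inl ⟨huv, hs⟩), fun hs => hf_lt v u (.inr ⟨huv, hs⟩)⟩⟩
end

section
/- Let G be a signed complete graph on n >= 2 vertices such that every triangle has an odd number of positive edges, and suppose G has at least one negative edge. Then the 'positive-edge' equivalence classes partition the vertices into exactly two nonempty sets. -/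
theorem eq_one_or_eq_one_of_odd_of_ne_one {x y z : ℤ}
    (hodd : Odd ((if x = 1 then 1 else 0) + (if y = 1 then 1 else 0) +
      (if z = 1 then 1 else 0) : ℕ))
    (hx : x ≠ 1) : y = 1 ∨ z = 1 := by
  by_contra! h
  simp [hx, h.1, h.2] at hodd

theorem stmt10_general {V : Type*} (s : V → V → ℤ)
    (htri : ∀ u v w : V, u ≠ v → v ≠ w → u ≠ w →
      Odd ((if s u v = 1 then 1 else 0) + (if s v w = 1 then 1 else 0) +
        (if s u w = 1 then 1 else 0) : ℕ))
    (hneg : ∃ u v : V, u ≠ v ∧ s u v = -1) :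
    ∃ a b : V, ¬ (a = b ∨ s a b = 1) ∧
      ∀ v : V, (a = v ∨ s a v = 1) ∨ (b = v ∨ s b v = 1) := by
  obtain ⟨a, b, hab, hs⟩ := hneg
  have hab_ne_one : s a b ≠ 1 := by omega
  refine ⟨a, b, not_or.mpr ⟨hab, hab_ne_one⟩, fun v => ?_⟩
  by_cases hav : a = v
  · exact Or.inl (Or.inl hav)
  by_cases hbv : b = v
  · exact Or.inr (Or.inl hbv)
  rcases eq_one_or_eq_one_of_odd_of_ne_one (htri a b v hab hbv hav) hab_ne_one with hb | ha
  · exact Or.inr (Or.inr hb)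
  · exact Or.inl (Or.inr ha)

/-- In a balanced signed complete graph on at least two vertices with at least
one negative edge, the positive-edge equivalence relation has exactly two
nonempty classes. -/
theorem stmt10 {V : Type*} [Fintype V] (s : V → V → ℤ)
    (hsymm : ∀ u v : V, s u v = s v u)
    (hsign : ∀ u v : V, u ≠ v → s u v = 1 ∨ s u v = -1)
    (htri : ∀ u v w : V, u ≠ v → v ≠ w → u ≠ w →
      Odd ((if s u v = 1 then 1 else 0) + (if s v w = 1 then 1 else 0) +
        (if s u w = 1 then 1 else 0) : ℕ))
    (hcard : 2 ≤ Fintype.card V)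
    (hneg : ∃ u v : V, u ≠ v ∧ s u v = -1) :
    ∃ a b : V, ¬ (a = b ∨ s a b = 1) ∧
      ∀ v : V, (a = v ∨ s a v = 1) ∨ (b = v ∨ s b v = 1) :=
  stmt10_general s htri hneg
end

section
/- Let G be a signed, undirected, connected graph (not necessarily complete) in which every cycle has an even number of negative edges. Then the vertices of G can be partitioned into two sets A and B such that all edges within A and within B are positive and all edges between A and B are negative. -/
/-!
Record the sign of an edge by its parity `negParity s u v : ZMod 2`. A closed walk with a repeated
vertex splits there into two shorter closed walks, and a closed walk of length at most 2 runs along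
one edge and back, so by induction every closed walk has even negative parity. Hence the parity of a
walk from a fixed base vertex depends only on its endpoint, which gives a potential
`f : V → ZMod 2` with `negParity s u v = f u + f v` on every edge; take `A = {f = 0}`.
-/

open Finset

namespace SeqWalk

variable {V M : Type*}

def IsWalk (Adj : V → V → Prop) (p : ℕ → V) (n : ℕ) : Prop :=
  ∀ i < n, Adj (p i) (p (i + 1))

def weight [AddCommMonoid M] (w : V → V → M) (p : ℕ → V) (n : ℕ) : M :=
  ∑ i ∈ range n, w (p i) (p (i + 1))

def append (p : ℕ → V) (m : ℕ) (q : ℕ → V) : ℕ → V :=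
  fun k => if k ≤ m then p k else q (k - m)

def edge (u v : V) : ℕ → V :=
  fun k => if k = 0 then u else v

def reverse (p : ℕ → V) (n : ℕ) : ℕ → V :=
  fun k => p (n - k)

section Walk

variable {Adj : V → V → Prop} {p q : ℕ → V} {k m n : ℕ}

lemma append_of_le (h : k ≤ m) : append p m q k = p k := if_pos h

lemma append_add (h : p m = q 0) (k : ℕ) : append p m q (m + k) = q k := by
  rcases k.eq_zero_or_pos with rfl | hk
  · simpa [append] using h
  · simp [append, show ¬ m + k ≤ m by omega]

lemma IsWalk.mono (hp : IsWalk Adj p n) (h : m ≤ n) : IsWalk Adj p m :=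
  fun i hi => hp i (hi.trans_le h)

lemma IsWalk.shift (hp : IsWalk Adj p (m + n)) : IsWalk Adj (fun k => p (m + k)) n :=
  fun i hi => by simpa only [← add_assoc] using hp (m + i) (by omega)

lemma isWalk_edge {u v : V} (h : Adj u v) : IsWalk Adj (edge u v) 1 := by
  intro i hi
  obtain rfl : i = 0 := by omega
  simpa [edge] using h

lemma IsWalk.append (hp : IsWalk Adj p m) (hq : IsWalk Adj q n) (h : p m = q 0) :
    IsWalk Adj (append p m q) (m + n) := by
  intro i hi
  rcases lt_or_ge i m with him | hmi
  · rw [append_of_le him.le, append_of_le him]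
    exact hp i him
  · obtain ⟨k, rfl⟩ := Nat.exists_eq_add_of_le hmi
    rw [append_add h, add_assoc, append_add h]
    exact hq k (by omega)

lemma IsWalk.reverse (hsymm : ∀ u v, Adj u v → Adj v u) (hp : IsWalk Adj p n) :
    IsWalk Adj (reverse p n) n := by
  intro i hi
  have := hsymm _ _ (hp (n - (i + 1)) (by omega))
  rwa [show n - (i + 1) + 1 = n - i by omega] at this

lemma exists_isWalk_of_reflTransGen {u v : V} (h : Relation.ReflTransGen Adj u v) :
    ∃ n p, p 0 = u ∧ p n = v ∧ IsWalk Adj p n := by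
  induction h with
  | refl => exact ⟨0, fun _ => u, rfl, rfl, fun _ h => absurd h (Nat.not_lt_zero _)⟩
  | @tail b c _ hbc ih =>
    obtain ⟨n, p, hp0, hpn, hp⟩ := ih
    have hjoin : p n = edge b c 0 := hpn
    refine ⟨n + 1, append p n (edge b c), ?_, ?_, hp.append (isWalk_edge hbc) hjoin⟩
    · rwa [append_of_le n.zero_le]
    · rw [append_add hjoin]; rfl

end Walk

section Weight

variable [AddCommMonoid M] {w : V → V → M} {p q : ℕ → V} {m n : ℕ}

lemma weight_add (w : V → V → M) (p : ℕ → V) (m n : ℕ) :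
    weight w p (m + n) = weight w p m + weight w (fun k => p (m + k)) n := by
  simp only [weight, sum_range_add, add_assoc]

lemma weight_append (h : p m = q 0) :
    weight w (append p m q) (m + n) = weight w p m + weight w q n := by
  rw [weight_add]
  congr 1
  · refine sum_congr rfl fun i hi => ?_
    rw [mem_range] at hi
    rw [append_of_le hi.le, append_of_le hi]
  · refine sum_congr rfl fun i _ => ?_
    dsimp only
    rw [append_add h, append_add h]

lemma weight_edge (u v : V) : weight w (edge u v) 1 = w u v := by
  simp [weight, edge]

lemma weight_reverse (hw : ∀ u v, w u v = w v u) : weight w (reverse p n) n = weight w p n := by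
  rw [weight, ← sum_range_reflect]
  refine sum_congr rfl fun i hi => ?_
  rw [mem_range] at hi
  simp only [reverse, show n - (n - 1 - i) = i + 1 by omega,
    show n - (n - 1 - i + 1) = i by omega, hw]

end Weight

section Parity

variable {Adj : V → V → Prop} {w : V → V → ZMod 2}

lemma exists_shorter_closed_of_not_injOn {p : ℕ → V} {n : ℕ} (hp : IsWalk Adj p n)
    (hclosed : p n = p 0) (hinj : ¬ Set.InjOn p (Set.Iio n)) :
    ∃ a q b r, a < n ∧ IsWalk Adj q a ∧ q a = q 0 ∧ b < n ∧ IsWalk Adj r b ∧ r b = r 0 ∧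
      weight w p n = weight w q a + weight w r b := by
  obtain ⟨i, j, hij, hjn, hpij⟩ : ∃ i j, i < j ∧ j < n ∧ p i = p j := by
    simp only [Set.InjOn, Set.mem_Iio, not_forall] at hinj
    obtain ⟨a, ha, b, hb, hab, hne⟩ := hinj
    rcases lt_or_gt_of_ne hne with h | h
    · exact ⟨a, b, h, hb, hab⟩
    · exact ⟨b, a, h, ha, hab.symm⟩
  obtain ⟨d, rfl⟩ := Nat.exists_eq_add_of_lt hij
  obtain ⟨e, rfl⟩ := Nat.exists_eq_add_of_lt hjn
  -- the loop `p i, …, p (i + d + 1)`, and the rest of `p` with this loop cut out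
  have hjoin : p (i + d + 1 + (e + 1)) = p 0 := by rw [← add_assoc]; exact hclosed
  refine ⟨d + 1, fun k => p (i + k), e + 1 + i, append (fun k => p (i + d + 1 + k)) (e + 1) p,
    by omega, (hp.mono (by omega)).shift, by simpa [← add_assoc] using hpij.symm,
    by omega, ?_, ?_, ?_⟩
  · exact (hp.shift (m := i + d + 1)).append (hp.mono (by omega)) hjoin
  · rw [append_add (p := fun k => p (i + d + 1 + k)) hjoin]
    simpa [append] using hpij
  · rw [weight_append (p := fun k => p (i + d + 1 + k)) hjoin,
      show i + d + 1 + e + 1 = i + (d + 1) + (e + 1) by omega,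
      weight_add w p (i + (d + 1)), weight_add w p i]
    simp only [add_assoc]
    abel

theorem weight_eq_zero_of_closed (hirr : ∀ v, ¬ Adj v v) (hw : ∀ u v, w u v = w v u)
    (hcycle : ∀ k p, 3 ≤ k → Set.InjOn p (Set.Iio k) → p k = p 0 → IsWalk Adj p k →
      weight w p k = 0) (n : ℕ) (p : ℕ → V) (hp : IsWalk Adj p n) (hclosed : p n = p 0) :
    weight w p n = 0 := by
  induction n using Nat.strong_induction_on generalizing p with
  | _ n ih =>
  by_cases hinj : Set.InjOn p (Set.Iio n)
  · match n, hp, hclosed, hinj with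
    | 0, _, _, _ => rfl
    | 1, hp, hclosed, _ => exact absurd (hclosed ▸ hp 0 one_pos) (hirr _)
    | 2, _, hclosed, _ =>
      simp [weight, sum_range_succ, hclosed, hw (p 1) (p 0), CharTwo.add_self_eq_zero]
    | k + 3, hp, hclosed, hinj => exact hcycle (k + 3) p (by omega) hinj hclosed hp
  · obtain ⟨a, q, b, r, ha, hq, hqa, hb, hr, hrb, hsum⟩ :=
      exists_shorter_closed_of_not_injOn (w := w) hp hclosed hinj
    rw [hsum, ih a ha q hq hqa, ih b hb r hr hrb, add_zero]

lemma weight_eq_of_isWalk_of_same_ends (hsymm : ∀ u v, Adj u v → Adj v u)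
    (hw : ∀ u v, w u v = w v u)
    (hclosed : ∀ n p, IsWalk Adj p n → p n = p 0 → weight w p n = 0)
    {p q : ℕ → V} {m n : ℕ} (hp : IsWalk Adj p m) (hq : IsWalk Adj q n)
    (h0 : p 0 = q 0) (hend : p m = q n) : weight w p m = weight w q n := by
  have hjoin : p m = reverse q n 0 := by simpa [reverse] using hend
  have := hclosed (m + n) (append p m (reverse q n))
    (hp.append (hq.reverse hsymm) hjoin) (by simp [append_add hjoin, reverse, append_of_le, h0])
  rwa [weight_append hjoin, weight_reverse hw, CharTwo.add_eq_zero] at this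

theorem exists_potential (hsymm : ∀ u v, Adj u v → Adj v u) (hw : ∀ u v, w u v = w v u)
    (hconn : ∀ u v, Relation.ReflTransGen Adj u v)
    (hclosed : ∀ n p, IsWalk Adj p n → p n = p 0 → weight w p n = 0) :
    ∃ f : V → ZMod 2, ∀ u v, Adj u v → w u v = f u + f v := by
  rcases isEmpty_or_nonempty V with hV | ⟨⟨v₀⟩⟩
  · exact ⟨0, fun u => hV.elim u⟩
  choose n p hp0 hpn hp using fun v => exists_isWalk_of_reflTransGen (hconn v₀ v)
  refine ⟨fun v => weight w (p v) (n v), fun u v huv => ?_⟩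
  have hjoin : p u (n u) = edge u v 0 := hpn u
  have hext := weight_eq_of_isWalk_of_same_ends hsymm hw hclosed
    ((hp u).append (isWalk_edge huv) hjoin) (hp v)
    (by rw [append_of_le (Nat.zero_le _), hp0, hp0]) (by rw [append_add hjoin, hpn]; rfl)
  rw [weight_append hjoin, weight_edge] at hext
  dsimp only
  rw [← hext, ← add_assoc, CharTwo.add_self_eq_zero, zero_add]

end Parity

def negParity (s : V → V → ℤ) (u v : V) : ZMod 2 :=
  if s u v = -1 then 1 else 0

lemma weight_negParity (s : V → V → ℤ) (p : ℕ → V) (k : ℕ) :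
    weight (negParity s) p k = #{i ∈ range k | s (p i) (p (i + 1)) = -1} := by
  simp [weight, negParity, sum_boole]

lemma negParity_eq_zero_iff {s : V → V → ℤ} {u v : V} (h : s u v = 1 ∨ s u v = -1) :
    negParity s u v = 0 ↔ s u v = 1 := by
  rcases h with h | h <;> simp [negParity, h]

end SeqWalk

lemma ZMod.eq_iff_eq_zero_iff_eq_zero {a b : ZMod 2} : a = b ↔ (a = 0 ↔ b = 0) := by
  revert a b; decide

open SeqWalk

theorem stmt18_general {V : Type*} (Adj : V → V → Prop) (s : V → V → ℤ)
    (hAsymm : ∀ u v : V, Adj u v → Adj v u)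
    (hirr : ∀ v : V, ¬ Adj v v)
    (hssymm : ∀ u v : V, s u v = s v u)
    (hsign : ∀ u v : V, Adj u v → s u v = 1 ∨ s u v = -1)
    (hconn : ∀ u v : V, Relation.ReflTransGen Adj u v)
    (hcyc : ∀ (k : ℕ) (v : ℕ → V), 3 ≤ k → Set.InjOn v (Set.Iio k) →
      v k = v 0 → (∀ i < k, Adj (v i) (v (i + 1))) →
      Even (((Finset.range k).filter fun i => s (v i) (v (i + 1)) = -1).card)) :
    ∃ A : Set V, ∀ u v : V, Adj u v →
      (((u ∈ A) ↔ (v ∈ A)) → s u v = 1) ∧ (¬ ((u ∈ A) ↔ (v ∈ A)) → s u v = -1) := by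
  have hw (u v : V) : negParity s u v = negParity s v u := by rw [negParity, negParity, hssymm]
  have hcycle (k : ℕ) (p : ℕ → V) (hk : 3 ≤ k) (hinj : Set.InjOn p (Set.Iio k))
      (hclosed : p k = p 0) (hp : IsWalk Adj p k) : weight (negParity s) p k = 0 := by
    rw [weight_negParity]
    exact (hcyc k p hk hinj hclosed hp).natCast_zmod_two
  obtain ⟨f, hf⟩ :=
    exists_potential hAsymm hw hconn (weight_eq_zero_of_closed hirr hw hcycle)
  refine ⟨{v | f v = 0}, fun u v huv => ?_⟩
  rw [Set.mem_ofPred_eq, Set.mem_ofPred_eq, ← ZMod.eq_iff_eq_zero_iff_eq_zero,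
    ← CharTwo.add_eq_zero, ← hf u v huv, negParity_eq_zero_iff (hsign u v huv)]
  exact ⟨id, (hsign u v huv).resolve_left⟩

/-- Harary's theorem: a connected signed graph in which every cycle has an
even number of negative edges can be partitioned into two sets with positive
edges inside the sets and negative edges across. -/
theorem stmt18 {V : Type*} [Fintype V] (Adj : V → V → Prop) (s : V → V → ℤ)
    (hAsymm : ∀ u v : V, Adj u v → Adj v u)
    (hirr : ∀ v : V, ¬ Adj v v)
    (hssymm : ∀ u v : V, s u v = s v u)
    (hsign : ∀ u v : V, Adj u v → s u v = 1 ∨ s u v = -1)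
    (hconn : ∀ u v : V, Relation.ReflTransGen Adj u v)
    (hcyc : ∀ (k : ℕ) (v : ℕ → V), 3 ≤ k → Set.InjOn v (Set.Iio k) →
      v k = v 0 → (∀ i < k, Adj (v i) (v (i + 1))) →
      Even (((Finset.range k).filter fun i => s (v i) (v (i + 1)) = -1).card)) :
    ∃ A : Set V, ∀ u v : V, Adj u v →
      (((u ∈ A) ↔ (v ∈ A)) → s u v = 1) ∧ (¬ ((u ∈ A) ↔ (v ∈ A)) → s u v = -1) :=
  stmt18_general Adj s hAsymm hirr hssymm hsign hconn hcyc
end
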